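/- Let (a_n) and (a'_n) be two sequences of real numbers which agree for all n > m, and let X_n = Σ_{i=1}^n ε_i a_i and X'_n = Σ_{i=1}^n ε_i a'_i be the associated Rademacher sums. Then for every n and every r > 0, 2^{-(m+1)} Q_r(X'_n) ≤ Q_r(X_n) ≤ 2^{m+1} Q_r(X'_n). -/

import Mathlib

open MeasureTheory ProbabilityTheory Filter ENNReal

/-- The Lévy concentration function `Q_r(X) = sup_x P(x < X ≤ x + r)`. -/
noncomputable def Qc {Ω : Type*} [MeasurableSpace Ω] (μ : Measure Ω) (X : Ω → ℝ) (r : ℝ) : ℝ≥0∞ :=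
  ⨆ x : ℝ, μ {ω | x < X ω ∧ X ω ≤ x + r}


/-- The Rademacher distribution on ℝ: ±1 with probability 1/2 each. -/
noncomputable def radMeasure : Measure ℝ :=
  (1/2 : ℝ≥0∞) • Measure.dirac 1 + (1/2 : ℝ≥0∞) • Measure.dirac (-1)

lemma rad_singleton (s : ℝ) (hs : s = 1 ∨ s = -1) : radMeasure {s} = 1/2 := by
  rcases hs with h | h <;> subst h <;>
    simp [radMeasure, Measure.dirac_apply', MeasurableSet.singleton, Set.indicator,
      show (-1 : ℝ) ≠ 1 by norm_num, show (1 : ℝ) ≠ -1 by norm_num]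

lemma rad_compl : radMeasure ({-1, 1} : Set ℝ)ᶜ = 0 := by
  simp [radMeasure, Measure.dirac_apply', (MeasurableSet.insert (MeasurableSet.singleton 1) (-1)).compl,
    Set.indicator]

/-- One-step lemma: changing a single coefficient at index `j` at most doubles `Qc`. -/
lemma step {Ω : Type*} [MeasurableSpace Ω] (μ : Measure Ω) [IsProbabilityMeasure μ]
    (ε : ℕ → Ω → ℝ) (hmeas : ∀ i, Measurable (ε i))
    (hdist : ∀ i, Measure.map (ε i) μ = radMeasure)
    (hindep : iIndepFun ε μ)
    (b b' : ℕ → ℝ) (j : ℕ) (hagree : ∀ i, i ≠ j → b i = b' i)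
    (n : ℕ) (r : ℝ) :
    Qc μ (fun ω => ∑ i ∈ Finset.Icc 1 n, ε i ω * b' i) r ≤
      2 * Qc μ (fun ω => ∑ i ∈ Finset.Icc 1 n, ε i ω * b i) r := by
  classical
  by_cases hj : j ∈ Finset.Icc 1 n
  swap
  · have heq : (fun ω => ∑ i ∈ Finset.Icc 1 n, ε i ω * b' i)
        = (fun ω => ∑ i ∈ Finset.Icc 1 n, ε i ω * b i) := by
      funext ω
      refine Finset.sum_congr rfl fun i hi => ?_
      rw [hagree i (by rintro rfl; exact hj hi)]
    rw [heq]
    exact le_mul_of_one_le_left zero_le one_le_two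
  -- main case
  set S := (Finset.Icc 1 n).erase j with hS
  set T : Ω → ℝ := fun ω => ∑ i ∈ S, ε i ω * b i with hT
  -- independence of T and ε j
  have hTmeas : Measurable T := by
    apply Finset.measurable_sum
    intro i _
    exact (hmeas i).mul_const _
  set φ : ℕ → ℝ → ℝ := fun i x => if i = j then x else x * b i with hφ
  have hφm : ∀ i, Measurable (φ i) := by
    intro i
    by_cases h : i = j
    · simpa [hφ, h] using measurable_id'
    · simpa [hφ, h] using measurable_mul_const (b i)
  have hg : iIndepFun (fun i => φ i ∘ ε i) μ :=
    hindep.comp φ hφm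
  have hjS : j ∉ S := Finset.notMem_erase j _
  have hInd : IndepFun (∑ i ∈ S, φ i ∘ ε i) (φ j ∘ ε j) μ :=
    hg.indepFun_finset_sum_of_notMem (fun i => (hφm i).comp (hmeas i)) hjS
  have hsum_eq : (∑ i ∈ S, φ i ∘ ε i) = T := by
    funext ω
    rw [Finset.sum_apply]
    refine Finset.sum_congr rfl fun i hi => ?_
    have : i ≠ j := Finset.ne_of_mem_erase hi
    simp [hφ, this]
  have hφj : φ j ∘ ε j = ε j := by funext ω; simp [hφ]
  rw [hsum_eq, hφj] at hInd
  -- key product formula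
  have key : ∀ (x : ℝ) (s : ℝ), MeasurableSet {s} →
      μ ({ω | x < T ω ∧ T ω ≤ x + r} ∩ ε j ⁻¹' {s}) = μ {ω | x < T ω ∧ T ω ≤ x + r} * μ (ε j ⁻¹' {s}) := by
    intro x s hms
    have : {ω | x < T ω ∧ T ω ≤ x + r} = T ⁻¹' Set.Ioc x (x + r) := rfl
    rw [this]
    exact hInd.measure_inter_preimage_eq_mul _ _ measurableSet_Ioc hms
  have hεj : ∀ s : ℝ, s = 1 ∨ s = -1 → μ (ε j ⁻¹' {s}) = 1/2 := by
    intro s hs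
    rw [← Measure.map_apply (hmeas j) (MeasurableSet.singleton s), hdist j]
    exact rad_singleton s hs
  have hεc : μ (ε j ⁻¹' ({-1, 1} : Set ℝ)ᶜ) = 0 := by
    rw [← Measure.map_apply (hmeas j)
      ((MeasurableSet.insert (MeasurableSet.singleton 1) (-1)).compl), hdist j]
    exact rad_compl
  -- decomposition of X b' event on the sign of ε j
  have hQb' : Qc μ (fun ω => ∑ i ∈ Finset.Icc 1 n, ε i ω * b' i) r ≤ Qc μ T r := by
    apply iSup_le
    intro y
    set A := {ω | y < ∑ i ∈ Finset.Icc 1 n, ε i ω * b' i ∧ ∑ i ∈ Finset.Icc 1 n, ε i ω * b' i ≤ y + r}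
    have hdecomp : ∀ ω, ∑ i ∈ Finset.Icc 1 n, ε i ω * b' i = ε j ω * b' j + T ω := by
      intro ω
      rw [hT, hS, ← Finset.add_sum_erase _ _ hj]
      congr 1
      refine Finset.sum_congr rfl fun i hi => ?_
      rw [hagree i (Finset.ne_of_mem_erase hi)]
    have hsub : A ⊆ (A ∩ ε j ⁻¹' {1}) ∪ ((A ∩ ε j ⁻¹' {-1}) ∪ ε j ⁻¹' ({-1, 1} : Set ℝ)ᶜ) := by
      intro ω hω
      by_cases h1 : ε j ω = 1
      · exact Or.inl ⟨hω, h1⟩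
      by_cases h2 : ε j ω = -1
      · exact Or.inr (Or.inl ⟨hω, h2⟩)
      · exact Or.inr (Or.inr (by simp [h1, h2]))
    have hcase : ∀ s : ℝ, s = 1 ∨ s = -1 →
        μ (A ∩ ε j ⁻¹' {s}) ≤ Qc μ T r * (1/2) := by
      intro s hs
      have hAeq : A ∩ ε j ⁻¹' {s}
          = {ω | y - s * b' j < T ω ∧ T ω ≤ (y - s * b' j) + r} ∩ ε j ⁻¹' {s} := by
        ext ω
        simp only [Set.mem_inter_iff, Set.mem_preimage, Set.mem_singleton_iff, A,
          Set.mem_setOf_eq]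
        constructor
        · rintro ⟨⟨h1, h2⟩, h3⟩
          rw [hdecomp ω, h3] at h1 h2
          exact ⟨⟨by linarith, by linarith⟩, h3⟩
        · rintro ⟨⟨h1, h2⟩, h3⟩
          refine ⟨?_, h3⟩
          rw [hdecomp ω, h3]
          exact ⟨by linarith, by linarith⟩
      rw [hAeq, key _ s (MeasurableSet.singleton s), hεj s hs]
      exact mul_le_mul_left
        (le_iSup (fun x => μ {ω | x < T ω ∧ T ω ≤ x + r}) (y - s * b' j)) _
    calc μ A ≤ μ (A ∩ ε j ⁻¹' {1}) + (μ (A ∩ ε j ⁻¹' {-1}) + μ (ε j ⁻¹' ({-1, 1} : Set ℝ)ᶜ)) :=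
          le_trans (measure_mono hsub) (le_trans (measure_union_le _ _)
            (add_le_add le_rfl (measure_union_le _ _)))
      _ ≤ Qc μ T r * (1/2) + (Qc μ T r * (1/2) + 0) := by
          gcongr
          · exact hcase 1 (Or.inl rfl)
          · exact hcase (-1) (Or.inr rfl)
          · exact le_of_eq hεc
      _ = Qc μ T r := by
          rw [add_zero, ← mul_add, one_div, ENNReal.inv_two_add_inv_two, mul_one]
  -- lower bound: Qc T ≤ 2 * Qc (X b)
  have hQT : Qc μ T r ≤ 2 * Qc μ (fun ω => ∑ i ∈ Finset.Icc 1 n, ε i ω * b i) r := by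
    apply iSup_le
    intro x
    have hdecomp : ∀ ω, ∑ i ∈ Finset.Icc 1 n, ε i ω * b i = ε j ω * b j + T ω := by
      intro ω
      rw [hT, hS, ← Finset.add_sum_erase _ _ hj]
    have hsub : {ω | x < T ω ∧ T ω ≤ x + r} ∩ ε j ⁻¹' {1}
        ⊆ {ω | x + b j < ∑ i ∈ Finset.Icc 1 n, ε i ω * b i ∧
            ∑ i ∈ Finset.Icc 1 n, ε i ω * b i ≤ (x + b j) + r} := by
      rintro ω ⟨⟨h1, h2⟩, h3⟩
      simp only [Set.mem_preimage, Set.mem_singleton_iff] at h3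
      rw [Set.mem_setOf_eq, hdecomp ω, h3]
      constructor <;> linarith
    have h1 : μ {ω | x < T ω ∧ T ω ≤ x + r} * (1/2)
        ≤ Qc μ (fun ω => ∑ i ∈ Finset.Icc 1 n, ε i ω * b i) r := by
      rw [← hεj 1 (Or.inl rfl), ← key x 1 (MeasurableSet.singleton 1)]
      exact le_trans (measure_mono hsub)
        (le_iSup (fun z => μ {ω | z < ∑ i ∈ Finset.Icc 1 n, ε i ω * b i ∧
          ∑ i ∈ Finset.Icc 1 n, ε i ω * b i ≤ z + r}) (x + b j))
    calc μ {ω | x < T ω ∧ T ω ≤ x + r}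
        = 2 * (μ {ω | x < T ω ∧ T ω ≤ x + r} * (1/2)) := by
          rw [mul_comm (2 : ℝ≥0∞), mul_assoc, one_div,
            ENNReal.inv_mul_cancel two_ne_zero ENNReal.ofNat_ne_top, mul_one]
      _ ≤ 2 * Qc μ (fun ω => ∑ i ∈ Finset.Icc 1 n, ε i ω * b i) r := by gcongr
  exact le_trans hQb' hQT

lemma main_le {Ω : Type*} [MeasurableSpace Ω] (μ : Measure Ω) [IsProbabilityMeasure μ]
    (ε : ℕ → Ω → ℝ) (hmeas : ∀ i, Measurable (ε i))
    (hdist : ∀ i, Measure.map (ε i) μ = radMeasure)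
    (hindep : iIndepFun ε μ)
    (a : ℕ → ℝ) (m : ℕ) (n : ℕ) (r : ℝ) :
    ∀ a' : ℕ → ℝ, (∀ i, m < i → a i = a' i) →
    Qc μ (fun ω => ∑ i ∈ Finset.Icc 1 n, ε i ω * a' i) r ≤
      (2 : ℝ≥0∞) ^ m * Qc μ (fun ω => ∑ i ∈ Finset.Icc 1 n, ε i ω * a i) r := by
  induction m with
  | zero =>
    intro a' hagree
    have heq : (fun ω => ∑ i ∈ Finset.Icc 1 n, ε i ω * a' i)
        = (fun ω => ∑ i ∈ Finset.Icc 1 n, ε i ω * a i) := by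
      funext ω
      refine Finset.sum_congr rfl fun i hi => ?_
      rw [hagree i (Finset.mem_Icc.mp hi).1]
    rw [heq, pow_zero, one_mul]
  | succ m ih =>
    intro a' hagree
    set b : ℕ → ℝ := fun i => if i = m + 1 then a i else a' i with hb
    have h1 : Qc μ (fun ω => ∑ i ∈ Finset.Icc 1 n, ε i ω * b i) r ≤
        (2 : ℝ≥0∞) ^ m * Qc μ (fun ω => ∑ i ∈ Finset.Icc 1 n, ε i ω * a i) r := by
      apply ih
      intro i hi
      rcases eq_or_lt_of_le (Nat.succ_le_of_lt hi) with h | h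
      · simp [hb, ← h]
      · simp only [hb]
        rw [if_neg (by omega), hagree i (by omega)]
    have h2 : Qc μ (fun ω => ∑ i ∈ Finset.Icc 1 n, ε i ω * a' i) r ≤
        2 * Qc μ (fun ω => ∑ i ∈ Finset.Icc 1 n, ε i ω * b i) r := by
      apply step μ ε hmeas hdist hindep b a' (m + 1) _ n r
      intro i hi
      simp [hb, hi]
    calc Qc μ (fun ω => ∑ i ∈ Finset.Icc 1 n, ε i ω * a' i) r
        ≤ 2 * Qc μ (fun ω => ∑ i ∈ Finset.Icc 1 n, ε i ω * b i) r := h2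
      _ ≤ 2 * ((2 : ℝ≥0∞) ^ m * Qc μ (fun ω => ∑ i ∈ Finset.Icc 1 n, ε i ω * a i) r) := by
          gcongr
      _ = (2 : ℝ≥0∞) ^ (m + 1) * Qc μ (fun ω => ∑ i ∈ Finset.Icc 1 n, ε i ω * a i) r := by
          rw [pow_succ, ← mul_assoc, mul_comm ((2:ℝ≥0∞)^m) 2]

theorem stmt7 {Ω : Type*} [MeasurableSpace Ω] (μ : Measure Ω) [IsProbabilityMeasure μ]
    (ε : ℕ → Ω → ℝ) (hmeas : ∀ i, Measurable (ε i))
    (hdist : ∀ i, Measure.map (ε i) μ = radMeasure)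
    (hindep : iIndepFun ε μ)
    (a a' : ℕ → ℝ) (m : ℕ) (hagree : ∀ i, m < i → a i = a' i)
    (n : ℕ) (r : ℝ) (hr : 0 < r) :
    ((2 : ℝ≥0∞) ^ (m + 1))⁻¹ * Qc μ (fun ω => ∑ i ∈ Finset.Icc 1 n, ε i ω * a' i) r ≤
        Qc μ (fun ω => ∑ i ∈ Finset.Icc 1 n, ε i ω * a i) r ∧
      Qc μ (fun ω => ∑ i ∈ Finset.Icc 1 n, ε i ω * a i) r ≤
        (2 : ℝ≥0∞) ^ (m + 1) * Qc μ (fun ω => ∑ i ∈ Finset.Icc 1 n, ε i ω * a' i) r := by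
  have hmono : ((2 : ℝ≥0∞) ^ m) ≤ (2 : ℝ≥0∞) ^ (m + 1) :=
    pow_le_pow_right₀ one_le_two (Nat.le_succ m)
  have key1 : Qc μ (fun ω => ∑ i ∈ Finset.Icc 1 n, ε i ω * a' i) r ≤
      (2 : ℝ≥0∞) ^ (m + 1) * Qc μ (fun ω => ∑ i ∈ Finset.Icc 1 n, ε i ω * a i) r :=
    (main_le μ ε hmeas hdist hindep a m n r a' hagree).trans (mul_le_mul_left hmono _)
  have key2 : Qc μ (fun ω => ∑ i ∈ Finset.Icc 1 n, ε i ω * a i) r ≤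
      (2 : ℝ≥0∞) ^ (m + 1) * Qc μ (fun ω => ∑ i ∈ Finset.Icc 1 n, ε i ω * a' i) r :=
    (main_le μ ε hmeas hdist hindep a' m n r a (fun i hi => (hagree i hi).symm)).trans
      (mul_le_mul_left hmono _)
  refine ⟨?_, key2⟩
  calc ((2 : ℝ≥0∞) ^ (m + 1))⁻¹ * Qc μ (fun ω => ∑ i ∈ Finset.Icc 1 n, ε i ω * a' i) r
      ≤ ((2 : ℝ≥0∞) ^ (m + 1))⁻¹ *
        ((2 : ℝ≥0∞) ^ (m + 1) * Qc μ (fun ω => ∑ i ∈ Finset.Icc 1 n, ε i ω * a i) r) :=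
        mul_le_mul_right key1 _
    _ = Qc μ (fun ω => ∑ i ∈ Finset.Icc 1 n, ε i ω * a i) r := by
        rw [← mul_assoc, ENNReal.inv_mul_cancel (pow_ne_zero _ two_ne_zero)
          (ENNReal.pow_ne_top ENNReal.ofNat_ne_top), one_mul]
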